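/- Let X be a compact Hausdorff space and 𝒜 a function algebra on X, and let A be a maximal set of antisymmetry of 𝒜. Then the restriction algebra 𝒜|_A = {u|_A : u ∈ 𝒜} is a closed subset of C(A, ℂ) (continuous complex-valued functions on the compact space A with the supremum norm). -/

import Mathlib

variable {X : Type*} [TopologicalSpace X] [CompactSpace X] [T2Space X]

/-- A function algebra on a compact Hausdorff space `X`: a closed subalgebra of `C(X, ℂ)`
(it contains the constants, being a subalgebra) which separates the points of `X`. -/
def IsFunctionAlgebra (𝒜 : Subalgebra ℂ C(X, ℂ)) : Prop :=
  IsClosed (𝒜 : Set C(X, ℂ)) ∧ ∀ x y : X, x ≠ y → ∃ u ∈ 𝒜, u x ≠ u y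

/-- `S` is a set of antisymmetry of `𝒜` if every `u ∈ 𝒜` which is real valued on `S`
is constant on `S`. -/
def IsAntisymmetrySet (𝒜 : Subalgebra ℂ C(X, ℂ)) (S : Set X) : Prop :=
  ∀ u ∈ 𝒜, (∀ x ∈ S, (u x).im = 0) → ∀ x ∈ S, ∀ y ∈ S, u x = u y

/-- A maximal set of antisymmetry: a set of antisymmetry not properly contained in any
other set of antisymmetry. -/
def IsMaximalAntisymmetrySet (𝒜 : Subalgebra ℂ C(X, ℂ)) (S : Set X) : Prop :=
  IsAntisymmetrySet 𝒜 S ∧ ∀ S', IsAntisymmetrySet 𝒜 S' → S ⊆ S' → S' = S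

/-!
The restriction map `𝒜 → C(A, ℂ)` is a bounded map out of a Banach space, so its range is closed
as soon as every element of the range lifts with norm control (`controlled_closure_of_complete`).
The lift comes from Glicksberg's argument. If `f ∈ 𝒜` had distance `d > sup_A |f|` from the ideal
`W` of functions of `𝒜` vanishing on `A`, Zorn's lemma would give a minimal closed set `E` on which
`f` keeps distance `d` from `W`. Minimality forces `E` to be a set of antisymmetry: a nonconstant
`u ∈ 𝒜` real on `E` splits `E` into two overlapping closed halves, on each of which `f` is closer
than `d` to some element of `W`, and the function `(1 - uⁿ)^(2ⁿ) ∈ 𝒜`, close to `1` on one half and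
to `0` on the other, glues the two approximants. By maximality of `A`, either `E ⊆ A`, where
`|f| < d`, or some `v ∈ 𝒜` is `0` on `A` and `1` on `E`, and then `f v ∈ W` equals `f` on `E`.
-/

open Set Metric

theorem one_sub_two_mul_pow_le_one_sub_pow_pow {t : ℝ} (h0 : 0 ≤ t) (h1 : t ≤ 1) (n : ℕ) :
    1 - (2 * t) ^ n ≤ (1 - t ^ n) ^ 2 ^ n := by
  have := one_add_mul_le_pow (a := -t ^ n) (by linarith [pow_le_one₀ h0 h1 (n := n)]) (2 ^ n)
  rw [mul_neg, ← sub_eq_add_neg, ← sub_eq_add_neg] at this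
  push_cast at this
  rwa [mul_pow]

theorem one_sub_pow_pow_mul_two_mul_pow_le_one {t : ℝ} (h0 : 0 ≤ t) (h1 : t ≤ 1) (n : ℕ) :
    (1 - t ^ n) ^ 2 ^ n * (2 * t) ^ n ≤ 1 := by
  set s := t ^ n
  have hs0 : 0 ≤ s := pow_nonneg h0 n
  have hs1 : s ≤ 1 := pow_le_one₀ h0 h1
  have hpos : 0 ≤ (1 - s) ^ 2 ^ n := pow_nonneg (by linarith) _
  calc (1 - s) ^ 2 ^ n * (2 * t) ^ n ≤ (1 - s) ^ 2 ^ n * (1 + 2 ^ n * s) := by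
        rw [mul_pow]; gcongr; linarith
    _ ≤ (1 - s) ^ 2 ^ n * (1 + s) ^ 2 ^ n := by
        gcongr; exact_mod_cast one_add_mul_le_pow (a := s) (by linarith) (2 ^ n)
    _ = (1 - s ^ 2) ^ 2 ^ n := by rw [← mul_pow]; ring
    _ ≤ 1 := pow_le_one₀ (by nlinarith) (by nlinarith)

theorem exists_one_sub_pow_pow_near_step {ε : ℝ} (hε : 0 < ε) :
    ∃ n : ℕ, ∀ t ∈ Icc (0 : ℝ) 1,
      (t ≤ 1 / 3 → 1 - ε ≤ (1 - t ^ n) ^ 2 ^ n) ∧ (2 / 3 ≤ t → (1 - t ^ n) ^ 2 ^ n ≤ ε) := by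
  obtain ⟨n, hn⟩ := (tendsto_pow_atTop_nhds_zero_of_lt_one (r := (3 / 4 : ℝ)) (by norm_num)
    (by norm_num)).eventually (ge_mem_nhds hε) |>.exists
  refine ⟨n, fun t ⟨h0, h1⟩ => ⟨fun ht => ?_, fun ht => ?_⟩⟩
  · have : (2 * t) ^ n ≤ (3 / 4) ^ n := pow_le_pow_left₀ (by positivity) (by linarith) n
    linarith [one_sub_two_mul_pow_le_one_sub_pow_pow h0 h1 n]
  · have h43 : (4 / 3 : ℝ) ^ n ≤ (2 * t) ^ n := pow_le_pow_left₀ (by norm_num) (by linarith) n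
    have hr : 0 ≤ (1 - t ^ n) ^ 2 ^ n := pow_nonneg (by linarith [pow_le_one₀ h0 h1 (n := n)]) _
    have key : (1 - t ^ n) ^ 2 ^ n * (4 / 3) ^ n ≤ 1 :=
      (mul_le_mul_of_nonneg_left h43 hr).trans (one_sub_pow_pow_mul_two_mul_pow_le_one h0 h1 n)
    have : (3 / 4 : ℝ) ^ n * (4 / 3) ^ n = 1 := by rw [← mul_pow]; norm_num
    nlinarith [pow_pos (by norm_num : (0 : ℝ) < 4 / 3) n]

section
omit [CompactSpace X] [T2Space X]
variable {𝒜 : Subalgebra ℂ C(X, ℂ)}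

theorem IsAntisymmetrySet.closure {S : Set X} (hS : IsAntisymmetrySet 𝒜 S) :
    IsAntisymmetrySet 𝒜 (_root_.closure S) := by
  intro u hu hreal
  rcases S.eq_empty_or_nonempty with rfl | ⟨a, ha⟩
  · simp
  have hconst : _root_.closure S ⊆ {z | u z = u a} :=
    closure_minimal (fun w hw => hS u hu (fun x hx => hreal x (subset_closure hx)) w hw a ha)
      (isClosed_eq u.continuous continuous_const)
  intro x hx y hy
  rw [hconst hx, hconst hy]

theorem IsMaximalAntisymmetrySet.isClosed {A : Set X} (hA : IsMaximalAntisymmetrySet 𝒜 A) :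
    IsClosed A := by
  rw [← hA.2 _ hA.1.closure subset_closure]
  exact isClosed_closure

theorem exists_eq_zero_eq_one_of_not_isAntisymmetrySet_union {E A : Set X}
    (hE : IsAntisymmetrySet 𝒜 E) (hA : IsAntisymmetrySet 𝒜 A)
    (hEA : ¬ IsAntisymmetrySet 𝒜 (E ∪ A)) :
    ∃ v ∈ 𝒜, (∀ x ∈ A, v x = 0) ∧ ∀ x ∈ E, v x = 1 := by
  simp only [IsAntisymmetrySet, not_forall] at hEA
  obtain ⟨u, hu, hreal, x, hx, y, hy, hxy⟩ := hEA
  have hconstE := hE u hu fun z hz => hreal z (.inl hz)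
  have hconstA := hA u hu fun z hz => hreal z (.inr hz)
  obtain ⟨e, he, a, ha, hne⟩ : ∃ e ∈ E, ∃ a ∈ A, u e ≠ u a := by
    rcases hx with hx | hx <;> rcases hy with hy | hy
    · exact absurd (hconstE x hx y hy) hxy
    · exact ⟨x, hx, y, hy, hxy⟩
    · exact ⟨y, hy, x, hx, Ne.symm hxy⟩
    · exact absurd (hconstA x hx y hy) hxy
  refine ⟨(u e - u a)⁻¹ • (u - algebraMap ℂ _ (u a)),
    𝒜.smul_mem (𝒜.sub_mem hu (𝒜.algebraMap_mem _)) _, fun z hz => ?_, fun z hz => ?_⟩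
  · simp [hconstA z hz a ha]
  · simp [hconstE z hz e he, sub_ne_zero.mpr hne]

theorem exists_re_mem_Icc_of_ne {E : Set X} (hE : IsCompact E) {u : C(X, ℂ)} (hu : u ∈ 𝒜)
    (hreal : ∀ x ∈ E, (u x).im = 0) {p q : X} (hp : p ∈ E) (hq : q ∈ E) (hpq : u p ≠ u q) :
    ∃ v ∈ 𝒜, (∀ x ∈ E, (v x).im = 0 ∧ (v x).re ∈ Icc 0 1) ∧
      (∃ p ∈ E, (v p).re = 0) ∧ ∃ q ∈ E, (v q).re = 1 := by
  have hu_eq : ∀ x ∈ E, u x = ((u x).re : ℂ) := fun x hx => Complex.ext rfl (by simp [hreal x hx])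
  have hcont : ContinuousOn (fun x => (u x).re) E :=
    (Complex.continuous_re.comp u.continuous).continuousOn
  obtain ⟨p', hp', hmin⟩ := hE.exists_isMinOn ⟨p, hp⟩ hcont
  obtain ⟨q', hq', hmax⟩ := hE.exists_isMaxOn ⟨p, hp⟩ hcont
  set a := (u p').re
  set b := (u q').re
  have hab : a < b := by
    by_contra! hba
    have hconst : ∀ x ∈ E, (u x).re = a := fun x hx =>
      le_antisymm ((hmax hx).trans hba) (hmin hx)
    exact hpq (by rw [hu_eq p hp, hu_eq q hq, hconst p hp, hconst q hq])
  have hv_eq : ∀ x ∈ E, ((b - a : ℂ)⁻¹ • (u - algebraMap ℂ _ (a : ℂ))) x =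
      (((u x).re - a) / (b - a) : ℝ) := by
    intro x hx
    simp only [ContinuousMap.smul_apply, ContinuousMap.sub_apply, algebraMap_apply,
      smul_eq_mul, mul_one]
    conv_lhs => rw [hu_eq x hx]
    push_cast
    ring
  refine ⟨(b - a : ℂ)⁻¹ • (u - algebraMap ℂ _ (a : ℂ)),
    𝒜.smul_mem (𝒜.sub_mem hu (𝒜.algebraMap_mem _)) _, fun x hx => ?_,
    ⟨p', hp', by rw [hv_eq p' hp', Complex.ofReal_re, sub_self, zero_div]⟩,
    ⟨q', hq', by rw [hv_eq q' hq', Complex.ofReal_re, div_self (sub_pos.2 hab).ne']⟩⟩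
  rw [hv_eq x hx, Complex.ofReal_im, Complex.ofReal_re]
  exact ⟨rfl, div_nonneg (sub_nonneg.2 (hmin hx)) (sub_pos.2 hab).le,
    div_le_one_of_le₀ (sub_le_sub_right (hmax hx) a) (sub_pos.2 hab).le⟩

theorem exists_mem_near_step {E : Set X} {v : C(X, ℂ)} (hv : v ∈ 𝒜)
    (hvE : ∀ x ∈ E, (v x).im = 0 ∧ (v x).re ∈ Icc 0 1) {ε : ℝ} (hε : 0 < ε) :
    ∃ h ∈ 𝒜, ∀ x ∈ E, ∃ r ∈ Icc (0 : ℝ) 1, h x = r ∧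
      ((v x).re ≤ 1 / 3 → 1 - ε ≤ r) ∧ (2 / 3 ≤ (v x).re → r ≤ ε) := by
  obtain ⟨n, hn⟩ := exists_one_sub_pow_pow_near_step hε
  refine ⟨(1 - v ^ n) ^ 2 ^ n, pow_mem (𝒜.sub_mem 𝒜.one_mem (pow_mem hv n)) _, fun x hx => ?_⟩
  obtain ⟨him, h0, h1⟩ := hvE x hx
  have htn : (v x).re ^ n ≤ 1 := pow_le_one₀ h0 h1
  refine ⟨(1 - (v x).re ^ n) ^ 2 ^ n,
    ⟨pow_nonneg (by linarith) _, pow_le_one₀ (by linarith) (by linarith [pow_nonneg h0 n])⟩,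
    ?_, hn _ ⟨h0, h1⟩⟩
  simp only [ContinuousMap.pow_apply, ContinuousMap.sub_apply, ContinuousMap.one_apply]
  conv_lhs => rw [show v x = ((v x).re : ℂ) from Complex.ext rfl (by simp [him])]
  push_cast
  rfl

theorem norm_sub_add_mul_sub_apply_le (f g₀ g₁ h : C(X, ℂ)) {x : X} {r : ℝ} (hr : r ∈ Icc 0 1)
    (hx : h x = r) :
    ‖(f - (g₁ + h * (g₀ - g₁))) x‖ ≤ (1 - r) * ‖(f - g₁) x‖ + r * ‖(f - g₀) x‖ := by
  have : (f - (g₁ + h * (g₀ - g₁))) x = ((1 - r : ℝ) : ℂ) * (f - g₁) x + (r : ℂ) * (f - g₀) x := by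
    simp only [ContinuousMap.sub_apply, ContinuousMap.add_apply, ContinuousMap.mul_apply, hx]
    push_cast
    ring
  rw [this]
  refine (norm_add_le _ _).trans_eq ?_
  rw [norm_mul, norm_mul, Complex.norm_of_nonneg (by linarith [hr.2]), Complex.norm_of_nonneg hr.1]

def IsDistantOn (W : Set C(X, ℂ)) (f : C(X, ℂ)) (d : ℝ) (E : Set X) : Prop :=
  ∀ g ∈ W, ∃ x ∈ E, d ≤ ‖(f - g) x‖

end

section
omit [T2Space X]
variable {𝒜 : Subalgebra ℂ C(X, ℂ)} {W : Set C(X, ℂ)} {f : C(X, ℂ)} {d : ℝ}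

theorem isDistantOn_univ (hd : 0 < d) (hdW : d ≤ infDist f W) : IsDistantOn W f d univ := by
  intro g hg
  by_contra! h
  have hlt : ‖f - g‖ < d := (ContinuousMap.norm_lt_iff _ hd).2 fun x => h x (mem_univ x)
  rw [← dist_eq_norm] at hlt
  linarith [infDist_le_dist_of_mem hg (x := f)]

theorem isDistantOn_sInter {c : Set (Set X)} (hc : IsChain (· ⊆ ·) c) (hne : c.Nonempty)
    (hclosed : ∀ E ∈ c, IsClosed E) (hdist : ∀ E ∈ c, IsDistantOn W f d E) :
    IsDistantOn W f d (⋂₀ c) := by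
  intro g hg
  have : Nonempty c := hne.to_subtype
  set t : c → Set X := fun E => E ∩ {x | d ≤ ‖(f - g) x‖}
  have htd : Directed (· ⊇ ·) t := by
    intro E F
    rcases hc.total E.2 F.2 with h | h
    · exact ⟨E, subset_rfl, inter_subset_inter_left _ h⟩
    · exact ⟨F, inter_subset_inter_left _ h, subset_rfl⟩
  have htcl : ∀ E, IsClosed (t E) := fun E =>
    (hclosed E E.2).inter (isClosed_le continuous_const (f - g).continuous.norm)
  obtain ⟨x, hx⟩ := IsCompact.nonempty_iInter_of_directed_nonempty_isCompact_isClosed t htd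
    (fun E => (hdist E E.2) g hg) (fun E => (htcl E).isCompact) htcl
  rw [mem_iInter] at hx
  exact ⟨x, mem_sInter.2 fun E hE => (hx ⟨E, hE⟩).1, (hx (Classical.arbitrary c)).2⟩

theorem exists_minimal_isDistantOn (hd : IsDistantOn W f d univ) :
    ∃ E, Minimal (fun E => IsClosed E ∧ IsDistantOn W f d E) E := by
  obtain ⟨E, -, hE⟩ := zorn_superset_nonempty {E | IsClosed E ∧ IsDistantOn W f d E}
    (fun c hcS hc hne => ⟨⋂₀ c, ⟨isClosed_sInter fun E hE => (hcS hE).1,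
      isDistantOn_sInter hc hne (fun E hE => (hcS hE).1) fun E hE => (hcS hE).2⟩,
      fun _ => sInter_subset_of_mem⟩) univ ⟨isClosed_univ, hd⟩
  exact ⟨E, hE⟩

theorem exists_forall_norm_le_of_not_isDistantOn {E : Set X} (hE : IsClosed E)
    (h : ¬ IsDistantOn W f d E) : ∃ g ∈ W, ∃ s < d, ∀ x ∈ E, ‖(f - g) x‖ ≤ s := by
  simp only [IsDistantOn, not_forall, not_exists, not_and, not_le] at h
  obtain ⟨g, hg, hlt⟩ := h
  refine ⟨g, hg, ?_⟩
  rcases E.eq_empty_or_nonempty with rfl | hne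
  · exact ⟨d - 1, by linarith, by simp⟩
  obtain ⟨x₀, hx₀, hmax⟩ := hE.isCompact.exists_isMaxOn hne (f - g).continuous.norm.continuousOn
  exact ⟨_, hlt x₀ hx₀, fun x hx => hmax hx⟩

theorem IsDistantOn.inter_re_le_or_inter_le_re
    (hW : ∀ g₀ ∈ W, ∀ g₁ ∈ W, ∀ h ∈ 𝒜, g₁ + h * (g₀ - g₁) ∈ W)
    {E : Set X} (hE : IsClosed E) (hdist : IsDistantOn W f d E)
    {v : C(X, ℂ)} (hv : v ∈ 𝒜) (hvE : ∀ x ∈ E, (v x).im = 0 ∧ (v x).re ∈ Icc 0 1) :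
    IsDistantOn W f d (E ∩ {x | (v x).re ≤ 2 / 3}) ∨
      IsDistantOn W f d (E ∩ {x | 1 / 3 ≤ (v x).re}) := by
  by_contra! h
  have hre : Continuous fun x => (v x).re := Complex.continuous_re.comp v.continuous
  obtain ⟨g₀, hg₀, s₀, hs₀, hb₀⟩ := exists_forall_norm_le_of_not_isDistantOn
    (hE.inter (isClosed_le hre continuous_const)) h.1
  obtain ⟨g₁, hg₁, s₁, hs₁, hb₁⟩ := exists_forall_norm_le_of_not_isDistantOn
    (hE.inter (isClosed_le continuous_const hre)) h.2
  set s := max s₀ s₁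
  set C := ‖f - g₀‖ + ‖f - g₁‖
  have hC : 0 ≤ C := by positivity
  have hsd : s < d := max_lt hs₀ hs₁
  obtain ⟨ε, hε, hεC⟩ : ∃ ε > 0, s + ε * C < d :=
    ⟨(d - s) / (C + 1), div_pos (sub_pos.2 hsd) (by positivity), by
      rw [div_mul_eq_mul_div, ← lt_sub_iff_add_lt', div_lt_iff₀ (by positivity)]; nlinarith⟩
  obtain ⟨h, hh, hhE⟩ := exists_mem_near_step hv hvE hε
  -- On `E`, `g₁ + h (g₀ - g₁)` is close to `g₀` where `v ≤ 1/3` and to `g₁` where `v ≥ 2/3`.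
  obtain ⟨x, hx, hdx⟩ := hdist _ (hW g₀ hg₀ g₁ hg₁ h hh)
  obtain ⟨r, hr, hhx, hlo, hhi⟩ := hhE x hx
  set a₀ := ‖(f - g₀) x‖
  set a₁ := ‖(f - g₁) x‖
  have hcomb := norm_sub_add_mul_sub_apply_le f g₀ g₁ h hr hhx
  have hC₀ : a₀ ≤ C := ((f - g₀).norm_coe_le_norm x).trans (le_add_of_nonneg_right (norm_nonneg _))
  have hC₁ : a₁ ≤ C := ((f - g₁).norm_coe_le_norm x).trans (le_add_of_nonneg_left (norm_nonneg _))
  obtain ⟨hs₀s, hs₁s⟩ : s₀ ≤ s ∧ s₁ ≤ s := ⟨le_max_left _ _, le_max_right _ _⟩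
  obtain ⟨ha₀, ha₁⟩ : 0 ≤ a₀ ∧ 0 ≤ a₁ := ⟨norm_nonneg _, norm_nonneg _⟩
  have : (1 - r) * a₁ + r * a₀ ≤ s + ε * C := by
    rcases le_or_gt (v x).re (1 / 3) with ht | ht
    · have := hb₀ x ⟨hx, show (v x).re ≤ 2 / 3 by linarith⟩
      nlinarith [hlo ht, hr.1, hr.2]
    rcases le_or_gt (2 / 3) (v x).re with ht' | ht'
    · have := hb₁ x ⟨hx, show 1 / 3 ≤ (v x).re by linarith⟩
      nlinarith [hhi ht', hr.1, hr.2]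
    · have := hb₀ x ⟨hx, ht'.le⟩
      have := hb₁ x ⟨hx, ht.le⟩
      nlinarith [hr.1, hr.2]
  linarith

theorem isAntisymmetrySet_of_minimal_isDistantOn
    (hW : ∀ g₀ ∈ W, ∀ g₁ ∈ W, ∀ h ∈ 𝒜, g₁ + h * (g₀ - g₁) ∈ W) {E : Set X}
    (hE : Minimal (fun E => IsClosed E ∧ IsDistantOn W f d E) E) : IsAntisymmetrySet 𝒜 E := by
  intro u hu hreal p hp q hq
  by_contra hpq
  obtain ⟨v, hv, hvE, ⟨p', hp', hvp'⟩, q', hq', hvq'⟩ :=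
    exists_re_mem_Icc_of_ne hE.prop.1.isCompact hu hreal hp hq hpq
  have hre : Continuous fun x => (v x).re := Complex.continuous_re.comp v.continuous
  rcases hE.prop.2.inter_re_le_or_inter_le_re hW hE.prop.1 hv hvE with h | h
  · have hEq := hE.eq_of_subset ⟨hE.prop.1.inter (isClosed_le hre continuous_const), h⟩
      inter_subset_left
    have : (v q').re ≤ 2 / 3 := (hEq.symm ▸ hq' : q' ∈ E ∩ _).2
    linarith
  · have hEq := hE.eq_of_subset ⟨hE.prop.1.inter (isClosed_le continuous_const hre), h⟩
      inter_subset_left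
    have : 1 / 3 ≤ (v p').re := (hEq.symm ▸ hp' : p' ∈ E ∩ _).2
    linarith

theorem exists_mem_eqOn_norm_lt {A : Set X} (hA : IsMaximalAntisymmetrySet 𝒜 A) (hf : f ∈ 𝒜)
    {c c' : ℝ} (hc : 0 ≤ c) (hfA : ∀ x ∈ A, ‖f x‖ ≤ c) (hcc' : c < c') :
    ∃ g ∈ 𝒜, EqOn g f A ∧ ‖g‖ < c' := by
  set W := {w | w ∈ 𝒜 ∧ ∀ x ∈ A, w x = 0}
  have h0W : 0 ∈ W := ⟨𝒜.zero_mem, fun _ _ => rfl⟩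
  suffices infDist f W ≤ c by
    obtain ⟨w, ⟨hw, hwA⟩, hfw⟩ := (infDist_lt_iff ⟨0, h0W⟩).1 (this.trans_lt hcc')
    exact ⟨f - w, 𝒜.sub_mem hf hw, fun x hx => by simp [hwA x hx], by rwa [← dist_eq_norm]⟩
  have hW : ∀ g₀ ∈ W, ∀ g₁ ∈ W, ∀ h ∈ 𝒜, g₁ + h * (g₀ - g₁) ∈ W := by
    rintro g₀ ⟨hg₀, hg₀A⟩ g₁ ⟨hg₁, hg₁A⟩ h hh
    exact ⟨𝒜.add_mem hg₁ (𝒜.mul_mem hh (𝒜.sub_mem hg₀ hg₁)), fun x hx => by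
      simp [hg₀A x hx, hg₁A x hx]⟩
  by_contra! hcd
  obtain ⟨E, hE⟩ := exists_minimal_isDistantOn (isDistantOn_univ (hc.trans_lt hcd) le_rfl)
  have hEanti := isAntisymmetrySet_of_minimal_isDistantOn hW hE
  by_cases hEA : IsAntisymmetrySet 𝒜 (E ∪ A)
  · have hEsub : E ⊆ A := hA.2 _ hEA subset_union_right ▸ subset_union_left
    obtain ⟨x, hx, hdx⟩ := hE.prop.2 0 h0W
    rw [sub_zero] at hdx
    linarith [hfA x (hEsub hx)]
  · obtain ⟨v, hv, hvA, hvE⟩ :=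
      exists_eq_zero_eq_one_of_not_isAntisymmetrySet_union hEanti hA.1 hEA
    obtain ⟨x, hx, hdx⟩ :=
      hE.prop.2 (f * v) ⟨𝒜.mul_mem hf hv, fun x hx => by simp [hvA x hx]⟩
    simp [hvE x hx] at hdx
    linarith

variable (𝒜) (A : Set X) [CompactSpace A]

noncomputable def restrictHom : NormedAddGroupHom 𝒜 C(A, ℂ) :=
  AddMonoidHom.mkNormedAddGroupHom
    { toFun := fun u => (u : C(X, ℂ)).restrict A, map_zero' := rfl, map_add' := fun _ _ => rfl } 1
    fun u => by
      rw [one_mul]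
      exact (ContinuousMap.norm_le _ (norm_nonneg _)).2 fun x => (u : C(X, ℂ)).norm_coe_le_norm x

variable {𝒜 A}

theorem restrictHom_surjectiveOnWith (hA : IsMaximalAntisymmetrySet 𝒜 A) :
    (restrictHom 𝒜 A).SurjectiveOnWith (restrictHom 𝒜 A).range 2 := by
  rintro _ ⟨f, rfl⟩
  rcases (norm_nonneg (restrictHom 𝒜 A f)).eq_or_lt with h0 | hpos
  · exact ⟨0, by rw [map_zero, eq_comm, ← norm_eq_zero]; exact h0.symm, by simp⟩
  obtain ⟨g, hg, hgf, hgn⟩ := exists_mem_eqOn_norm_lt hA f.2 (norm_nonneg _)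
    (fun x hx => (restrictHom 𝒜 A f).norm_coe_le_norm ⟨x, hx⟩) (lt_two_mul_self hpos)
  exact ⟨⟨g, hg⟩, ContinuousMap.ext fun x => hgf x.2, hgn.le⟩

end

/-- For a maximal set of antisymmetry `A` of a function algebra `𝒜`, the restriction algebra
`𝒜|_A = {u|_A : u ∈ 𝒜}` is closed in `C(A, ℂ)`. -/
theorem restriction_to_maximal_antisymmetrySet_isClosed
    (𝒜 : Subalgebra ℂ C(X, ℂ)) (h𝒜 : IsFunctionAlgebra 𝒜)
    (A : Set X) (hA : IsMaximalAntisymmetrySet 𝒜 A) :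
    IsClosed ((fun u : C(X, ℂ) => u.restrict A) '' (𝒜 : Set C(X, ℂ))) := by
  have : CompactSpace A := isCompact_iff_compactSpace.1 hA.isClosed.isCompact
  have : CompleteSpace 𝒜 := h𝒜.1.isComplete.completeSpace_coe
  refine isClosed_of_closure_subset fun G hG => ?_
  have hG' : G ∈ (restrictHom 𝒜 A).range.topologicalClosure := by
    rw [← SetLike.mem_coe, AddSubgroup.topologicalClosure_coe]
    exact closure_mono (by rintro _ ⟨u, hu, rfl⟩; exact ⟨⟨u, hu⟩, rfl⟩) hG
  obtain ⟨g, rfl, -⟩ :=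
    controlled_closure_of_complete two_pos one_pos (restrictHom_surjectiveOnWith hA) G hG'
  exact ⟨g, g.2, rfl⟩
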